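/- If ℓ ≥ 5, ℓ ≠ 61, and λ is a prime ideal of Z[(1+√13)/2] above ℓ containing −1 + √13 − 62 or −1 − √13 − 62, then ℓ divides N(−63 + √13) = 3956 = 2²·23·43 or N(−63 − √13), hence ℓ ∈ {23, 43}; moreover, checking the other congruence −3 ± 3√13 ≡ 68 mod λ, these are simultaneously impossible for ℓ ∈ {23,43} with the same λ — in particular the congruence −1 ± √13 ≡ 62 (mod λ) has no solution with ℓ ∉ {2, 23, 43}. -/

import Mathlib

open Polynomial

/-- The ring `ℤ[(1+√13)/2]`, with `ω = (1+√13)/2` satisfying `ω² = ω + 3`: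
the ring of integers of `ℚ(√13)`. -/
noncomputable abbrev Zom : Type := AdjoinRoot (X ^ 2 - X - 3 : ℤ[X])

/-- `ω = (1+√13)/2`. -/
noncomputable abbrev om : Zom := AdjoinRoot.root (X ^ 2 - X - 3 : ℤ[X])

/-- `√13 = 2ω − 1`. -/
noncomputable abbrev sqrt13 : Zom := 2 * om - 1

/-! A prime `λ` containing `x = −63 ± √13` also contains `N(x) = x x̄ = 3956 = 2²·23·43`, and
a rational prime `ℓ ∈ λ` must divide every integer in `λ`, since otherwise `1 ∈ λ`.
So `ℓ ∈ {2, 23, 43}`.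
If `λ` also contained `y = −71 ± 3√13`, it would contain the integer `y − 3x = 118` or
`−y − 3x = 260`, neither of which is divisible by `23` or `43`. -/

theorem Nat.Prime.dvd_of_natCast_mem {R : Type*} [CommRing R] {I : Ideal R} (hI : I ≠ ⊤)
    {ℓ n : ℕ} (hℓ : ℓ.Prime) (hℓI : (ℓ : R) ∈ I) (hnI : (n : R) ∈ I) : ℓ ∣ n := by
  by_contra hdvd
  obtain ⟨u, v, huv⟩ := (Nat.isCoprime_iff_coprime.2 ((hℓ.coprime_iff_not_dvd).2 hdvd)).map
    (Int.castRingHom R)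
  simp only [eq_intCast, Int.cast_natCast] at huv
  exact hI (I.eq_top_of_isUnit_mem (huv ▸ I.add_mem (I.mul_mem_left u hℓI) (I.mul_mem_left v hnI))
    isUnit_one)

theorem Nat.Prime.eq_of_dvd_3956 {ℓ : ℕ} (hℓ : ℓ.Prime) (h : ℓ ∣ 3956) :
    ℓ = 2 ∨ ℓ = 23 ∨ ℓ = 43 := by
  have hfac : ℓ ∣ 2 ^ 2 * 23 * 43 := h
  rcases hℓ.dvd_mul.1 hfac with h | h43
  · rcases hℓ.dvd_mul.1 h with h4 | h23
    · exact .inl ((Nat.prime_dvd_prime_iff_eq hℓ Nat.prime_two).1 (hℓ.dvd_of_dvd_pow h4))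
    · exact .inr (.inl ((Nat.prime_dvd_prime_iff_eq hℓ (by norm_num)).1 h23))
  · exact .inr (.inr ((Nat.prime_dvd_prime_iff_eq hℓ (by norm_num)).1 h43))

namespace Zom

theorem om_sq : om ^ 2 = om + 3 := by
  have h := AdjoinRoot.eval₂_root (X ^ 2 - X - 3 : ℤ[X])
  simp only [eval₂_sub, eval₂_X_pow, eval₂_X, eval₂_ofNat] at h
  linear_combination h

noncomputable def basis : Module.Basis (Fin 2) ℤ Zom :=
  (AdjoinRoot.powerBasis' (by monicity! : (X ^ 2 - X - 3 : ℤ[X]).Monic)).basis.reindex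
    (finCongr (by compute_degree! : (X ^ 2 - X - 3 : ℤ[X]).natDegree = 2))

@[simp] theorem basis_zero : basis 0 = 1 := by
  rw [basis, Module.Basis.reindex_apply, PowerBasis.basis_eq_pow]; exact pow_zero _

@[simp] theorem basis_one : basis 1 = om := by
  rw [basis, Module.Basis.reindex_apply, PowerBasis.basis_eq_pow]; exact pow_one _

theorem basis_equivFun (a b : ℤ) : basis.equivFun ((a : Zom) + b * om) = ![a, b] := by
  apply basis.equivFun.symm.injective
  rw [LinearEquiv.symm_apply_apply, Module.Basis.equivFun_symm_apply]
  simp [Fin.sum_univ_two]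

theorem exists_eq_intCast_add_intCast_mul_om (x : Zom) : ∃ a b : ℤ, x = a + b * om :=
  ⟨basis.equivFun x 0, basis.equivFun x 1, by
    conv_lhs => rw [← basis.sum_equivFun x]
    simp [Fin.sum_univ_two]⟩

theorem leftMulMatrix_basis (a b : ℤ) :
    Algebra.leftMulMatrix basis ((a : Zom) + b * om) = !![a, 3 * b; b, a + b] := by
  have h1 : ((a : Zom) + b * om) * om = ((3 * b : ℤ) : Zom) + ((a + b : ℤ) : Zom) * om := by
    push_cast; linear_combination (b : Zom) * om_sq
  rw [Matrix.eta_fin_two (Algebra.leftMulMatrix basis _)]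
  simp only [Algebra.leftMulMatrix_eq_repr_mul, ← Module.Basis.equivFun_apply, basis_zero,
    basis_one, mul_one, h1, basis_equivFun]
  rfl

theorem norm_intCast_add_intCast_mul_om (a b : ℤ) :
    Algebra.norm ℤ ((a : Zom) + b * om) = a ^ 2 + a * b - 3 * b ^ 2 := by
  rw [Algebra.norm_eq_matrix_det basis, leftMulMatrix_basis, Matrix.det_fin_two_of]
  ring

/-- `N(a + bω) = (a + bω)(a + b − bω)`, the conjugate of `ω` being `1 − ω`. -/
theorem intCast_norm_mem {I : Ideal Zom} {x : Zom} (hx : x ∈ I) :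
    ((Algebra.norm ℤ x : ℤ) : Zom) ∈ I := by
  obtain ⟨a, b, rfl⟩ := exists_eq_intCast_add_intCast_mul_om x
  have h : ((a ^ 2 + a * b - 3 * b ^ 2 : ℤ) : Zom) = (a + b * om) * (a + b - b * om) := by
    push_cast; linear_combination (b : Zom) ^ 2 * om_sq
  rw [norm_intCast_add_intCast_mul_om, h]
  exact I.mul_mem_right _ hx

theorem norm_neg_sixtyThree_add_sqrt13 : Algebra.norm ℤ (-63 + sqrt13) = 3956 := by
  have h := norm_intCast_add_intCast_mul_om (-64) 2
  push_cast at h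
  rw [show -63 + sqrt13 = -64 + 2 * om by ring, h]

theorem norm_neg_sixtyThree_sub_sqrt13 : Algebra.norm ℤ (-63 - sqrt13) = 3956 := by
  have h := norm_intCast_add_intCast_mul_om (-62) (-2)
  push_cast at h
  rw [show -63 - sqrt13 = -62 + -2 * om by ring, h]

theorem eq_of_natCast_mem_of_congruence {I : Ideal Zom} (hI : I ≠ ⊤) {ℓ : ℕ} (hℓ : ℓ.Prime)
    (hℓI : (ℓ : Zom) ∈ I) (hx : -1 + sqrt13 - 62 ∈ I ∨ -1 - sqrt13 - 62 ∈ I) :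
    ℓ = 2 ∨ ℓ = 23 ∨ ℓ = 43 := by
  refine hℓ.eq_of_dvd_3956 (hℓ.dvd_of_natCast_mem hI hℓI ?_)
  rcases hx with hx | hx
  · have h := intCast_norm_mem (show -63 + sqrt13 ∈ I by convert hx using 1; ring)
    rw [norm_neg_sixtyThree_add_sqrt13] at h
    exact_mod_cast h
  · have h := intCast_norm_mem (show -63 - sqrt13 ∈ I by convert hx using 1; ring)
    rw [norm_neg_sixtyThree_sub_sqrt13] at h
    exact_mod_cast h

theorem natCast_mem_of_congruences {I : Ideal Zom}
    (hx : -1 + sqrt13 - 62 ∈ I ∨ -1 - sqrt13 - 62 ∈ I)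
    (hy : -3 + 3 * sqrt13 - 68 ∈ I ∨ -3 - 3 * sqrt13 - 68 ∈ I) :
    ((118 : ℕ) : Zom) ∈ I ∨ ((260 : ℕ) : Zom) ∈ I := by
  rcases hx with hx | hx <;> rcases hy with hy | hy
  · exact .inl (by convert I.add_mem (I.mul_mem_left (-3) hx) hy using 1; push_cast; ring)
  · exact .inr (by convert I.sub_mem (I.mul_mem_left (-3) hx) hy using 1; push_cast; ring)
  · exact .inr (by convert I.sub_mem (I.mul_mem_left (-3) hx) hy using 1; push_cast; ring)
  · exact .inl (by convert I.add_mem (I.mul_mem_left (-3) hx) hy using 1; push_cast; ring)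

end Zom

/-- `N(−63 ± √13) = 3956 = 2²·23·43`; if `ℓ ≥ 5` is a prime, `ℓ ≠ 61`, and `λ` is a
prime of `ℤ[(1+√13)/2]` above `ℓ` containing `−1 + √13 − 62` or `−1 − √13 − 62`, then
`ℓ ∈ {23, 43}` and the congruence `−3 ± 3√13 ≡ 68 (mod λ)` fails; in particular the
congruence `−1 ± √13 ≡ 62 (mod λ)` has no solution with `ℓ ∉ {2, 23, 43}`. -/
theorem stmt13 :
    (Algebra.norm ℤ (-63 + sqrt13) = 3956) ∧
    (Algebra.norm ℤ (-63 - sqrt13) = 3956) ∧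
    ((3956 : ℕ) = 2 ^ 2 * 23 * 43) ∧
    (∀ ℓ : ℕ, ℓ.Prime → 5 ≤ ℓ → ℓ ≠ 61 →
      ∀ lam : Ideal Zom, lam.IsPrime → (ℓ : Zom) ∈ lam →
        ((-1 + sqrt13 - 62 ∈ lam) ∨ (-1 - sqrt13 - 62 ∈ lam)) →
        (ℓ = 23 ∨ ℓ = 43) ∧
          ¬((-3 + 3 * sqrt13 - 68 ∈ lam) ∨ (-3 - 3 * sqrt13 - 68 ∈ lam))) ∧
    (∀ ℓ : ℕ, ℓ.Prime → ℓ ∉ ({2, 23, 43} : Set ℕ) →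
      ∀ lam : Ideal Zom, lam.IsPrime → (ℓ : Zom) ∈ lam →
        ¬((-1 + sqrt13 - 62 ∈ lam) ∨ (-1 - sqrt13 - 62 ∈ lam))) := by
  refine ⟨Zom.norm_neg_sixtyThree_add_sqrt13, Zom.norm_neg_sixtyThree_sub_sqrt13, by norm_num,
    ?_, ?_⟩
  · intro ℓ hℓ h5 _ lam hlam hℓI hx
    have hℓ23_43 : ℓ = 23 ∨ ℓ = 43 := by
      rcases Zom.eq_of_natCast_mem_of_congruence hlam.ne_top hℓ hℓI hx with h | h | h <;> omega
    refine ⟨hℓ23_43, fun hy => ?_⟩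
    have hdvd := (Zom.natCast_mem_of_congruences hx hy).imp
      (hℓ.dvd_of_natCast_mem hlam.ne_top hℓI) (hℓ.dvd_of_natCast_mem hlam.ne_top hℓI)
    rcases hℓ23_43 with rfl | rfl <;> norm_num at hdvd
  · intro ℓ hℓ hℓ_ne lam hlam hℓI hx
    rcases Zom.eq_of_natCast_mem_of_congruence hlam.ne_top hℓ hℓI hx with rfl | rfl | rfl <;>
      simp at hℓ_ne
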